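/- Let W be a 4-dimensional left vector space over a division ring, X = {x_1,…,x_5} a 4-independent subset of W, and Y = {y*_1,…,y*_5} a 4-independent subset of the dual space W*; let U_i denote the annihilator of y*_i in W (a 3-dimensional subspace). Assume that every U_i is spanned by a subset of X and that every line ⟨x_i⟩ is the intersection of some of the subspaces U_j. Let Z = J_2(X) ∩ J*_2(Y). Then |Z| ≤ 5 < 7 = a(5,2). -/

import Mathlib

open Submodule Set Function Module

/-- A family of vectors is `m`-independent if every `m`-element subfamily is
linearly independent. -/
def MIndep (R : Type*) {W : Type*} [DivisionRing R] [AddCommGroup W] [Module R W]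
    {n : ℕ} (m : ℕ) (x : Fin n → W) : Prop :=
  ∀ A : Finset (Fin n), A.card = m → LinearIndependent R (fun i : A => x (i : Fin n))

/-- `J_k(X)`: the set of all `k`-dimensional subspaces spanned by `k`-element subsets of
the family `x`. -/
def JkSet (R : Type*) {W : Type*} [DivisionRing R] [AddCommGroup W] [Module R W]
    {n : ℕ} (k : ℕ) (x : Fin n → W) : Set (Submodule R W) :=
  {P | ∃ A : Finset (Fin n), A.card = k ∧ P = Submodule.span R (x '' ↑A)}

/-- The special subset `J(+i,+j) ∪ J(-i)` of `J = J_k(X)`: all members of `J` which either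
contain both `x i` and `x j`, or do not contain `x i`. -/
def SpecialSubset (R : Type*) {W : Type*} [DivisionRing R] [AddCommGroup W] [Module R W]
    {n : ℕ} (k : ℕ) (x : Fin n → W) (i j : Fin n) : Set (Submodule R W) :=
  {P | P ∈ JkSet R k x ∧ ((x i ∈ P ∧ x j ∈ P) ∨ x i ∉ P)}

/-- A subset `Z` of `J = J_k(X)` is inexact if there is a `(2k)`-independent `n`-element
family `y` with `J_k(Y) ≠ J` and `Z ⊆ J_k(Y)`. -/
def InexactIn (R : Type*) {W : Type*} [DivisionRing R] [AddCommGroup W] [Module R W]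
    (n k : ℕ) (J : Set (Submodule R W)) (Z : Set (Submodule R W)) : Prop :=
  ∃ y : Fin n → W, Function.Injective y ∧ MIndep R (2 * k) y ∧
    JkSet R k y ≠ J ∧ Z ⊆ JkSet R k y

/-- `J*_k(Y)`: the set of annihilators in `W` of the elements of `J_k(Y)` for a family `y`
of linear functionals; equivalently, the intersections of `k` distinct kernels `U_j`. -/
def JStarSet (K : Type*) {W : Type*} [DivisionRing K] [AddCommGroup W] [Module K W]
    {n : ℕ} (k : ℕ) (y : Fin n → (W →ₗ[K] K)) : Set (Submodule K W) :=
  {P | ∃ A : Finset (Fin n), A.card = k ∧ P = ⨅ i ∈ A, LinearMap.ker (y i)}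


/-! Every line `⟨x v⟩` is an intersection of kernels `U_j`, and `t` hyperplanes meet in
codimension at most `t`, so each `x v` lies in at least three `U_j`; a proper subspace `U_j`
contains at most three vectors of the `4`-independent family. Counting incidences, both bounds
are attained. If `P = U_i ∩ U_j` lies in `J_2(X)` then `U_i` and `U_j` share two of the five
vectors, so some `x v` lies in neither; since `x v` lies outside exactly two kernels, `{i, j}`
is determined by `v`, which leaves at most five such `P`. -/

open Finset

namespace MIndep

variable {R W : Type*} [DivisionRing R] [AddCommGroup W] [Module R W] {n m : ℕ} {x : Fin n → W}

theorem linearIndependent_of_card_le (hx : MIndep R m x) (hmn : m ≤ n) {A : Finset (Fin n)}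
    (hA : #A ≤ m) : LinearIndependent R (fun i : A => x i) := by
  obtain ⟨B, hAB, hB⟩ := exists_superset_card_eq hA (by simpa using hmn)
  exact (hx B hB).comp (Set.inclusion hAB) (Set.inclusion_injective hAB)

theorem ne_zero (hx : MIndep R m x) (hm : 1 ≤ m) (hmn : m ≤ n) (i : Fin n) : x i ≠ 0 := by
  simpa using (hx.linearIndependent_of_card_le hmn (A := {i}) (by simpa using hm)).ne_zero
    ⟨i, mem_singleton_self i⟩

end MIndep

section Functionals

open scoped Classical

variable {K W : Type*} [DivisionRing K] [AddCommGroup W] [Module K W] [FiniteDimensional K W]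

theorem finrank_le_finrank_biInf_ker_add_card {ι : Type*} (y : ι → W →ₗ[K] K) (T : Finset ι) :
    finrank K W ≤ finrank K (⨅ j ∈ T, LinearMap.ker (y j) : Submodule K W) + #T := by
  have hker : LinearMap.ker (LinearMap.pi fun j : T => y j) = ⨅ j ∈ T, LinearMap.ker (y j) := by
    rw [LinearMap.ker_pi, iInf_subtype']
  have := LinearMap.finrank_range_add_finrank_ker (LinearMap.pi fun j : T => y j)
  have := (LinearMap.range (LinearMap.pi fun j : T => y j)).finrank_le
  rw [Module.finrank_fintype_fun_eq_card, Fintype.card_coe] at this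
  rw [← hker]
  omega

theorem MIndep.card_filter_mem_ker_lt {n : ℕ} {x : Fin n → W} (hx : MIndep K (finrank K W) x)
    {f : W →ₗ[K] K} (hf : f ≠ 0) :
    #{i | x i ∈ LinearMap.ker f} < finrank K W := by
  by_contra! h
  obtain ⟨B, hB, hBcard⟩ := exists_subset_card_eq h
  have hspan : Submodule.span K (Set.range fun i : B => x i) ≤ LinearMap.ker f := by
    rw [Submodule.span_le]
    rintro _ ⟨i, rfl⟩
    simpa using hB i.2
  have := Submodule.finrank_mono hspan
  rw [finrank_span_eq_card (hx B hBcard), Fintype.card_coe, hBcard] at this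
  exact hf (LinearMap.ker_eq_top.mp (Submodule.eq_top_of_finrank_eq
    (le_antisymm (Submodule.finrank_le _) this)))

theorem finrank_le_card_filter_mem_ker_add_one {ι : Type*} [Fintype ι] (y : ι → W →ₗ[K] K)
    {v : W} (hv : v ≠ 0) {T : Finset ι}
    (hT : Submodule.span K {v} = ⨅ j ∈ T, LinearMap.ker (y j)) :
    finrank K W ≤ #{j | v ∈ LinearMap.ker (y j)} + 1 := by
  have hTsub : T ⊆ ({j | v ∈ LinearMap.ker (y j)} : Finset ι) := fun j hj => by
    have : v ∈ ⨅ j ∈ T, LinearMap.ker (y j) := hT ▸ Submodule.mem_span_singleton_self v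
    simpa using (Submodule.mem_iInf _).mp ((Submodule.mem_iInf _).mp this j) hj
  have := finrank_le_finrank_biInf_ker_add_card y T
  rw [← hT, finrank_span_singleton hv] at this
  have := Finset.card_le_card hTsub
  omega

end Functionals

theorem Finset.card_bipartiteAbove_eq_of_le_of_le {α β : Type*} (r : α → β → Prop)
    [∀ a b, Decidable (r a b)] {s : Finset α} {t : Finset β} (hst : #s = #t) {k : ℕ}
    (hs : ∀ a ∈ s, k ≤ #(t.bipartiteAbove r a)) (ht : ∀ b ∈ t, #(s.bipartiteBelow r b) ≤ k) :
    (∀ a ∈ s, #(t.bipartiteAbove r a) = k) ∧ (∀ b ∈ t, #(s.bipartiteBelow r b) = k) := by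
  have hsum := sum_card_bipartiteAbove_eq_sum_card_bipartiteBelow (s := s) (t := t) r
  have h₁ := s.card_nsmul_le_sum _ _ hs
  have h₂ := t.sum_le_card_nsmul _ _ ht
  rw [hst, smul_eq_mul] at h₁
  rw [smul_eq_mul] at h₂
  constructor
  · have := (sum_eq_sum_iff_of_le hs).mp (by simp only [sum_const, smul_eq_mul, hst]; omega)
    exact fun a ha => (this a ha).symm
  · exact (sum_eq_sum_iff_of_le ht).mp (by simp only [sum_const, smul_eq_mul]; omega)

theorem exists_compl_bipartiteAbove_eq_pair (r : Fin 5 → Fin 5 → Prop)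
    [∀ a b, Decidable (r a b)] (habove : ∀ a, #(univ.bipartiteAbove r a) = 3)
    (hbelow : ∀ b, #(univ.bipartiteBelow r b) = 3) {i j : Fin 5} (hij : i ≠ j)
    (hcommon : 2 ≤ #(univ.bipartiteBelow r i ∩ univ.bipartiteBelow r j)) :
    ∃ v, (univ.bipartiteAbove r v)ᶜ = {i, j} := by
  have hunion := card_union_add_card_inter (univ.bipartiteBelow r i) (univ.bipartiteBelow r j)
  obtain ⟨v, -, hv⟩ := exists_mem_notMem_of_card_lt_card (t := univ)
    (s := univ.bipartiteBelow r i ∪ univ.bipartiteBelow r j)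
    (by rw [hbelow, hbelow] at hunion; simp only [card_univ, Fintype.card_fin]; omega)
  refine ⟨v, (eq_of_subset_of_card_le (fun k hk => ?_) ?_).symm⟩
  · simp only [Finset.mem_union, mem_bipartiteBelow, Finset.mem_univ, true_and, not_or] at hv
    simp only [Finset.mem_compl, mem_bipartiteAbove, Finset.mem_univ, true_and]
    rcases mem_insert.mp hk with rfl | hk
    · exact hv.1
    · exact mem_singleton.mp hk ▸ hv.2
  · rw [card_compl, habove, card_pair hij, Fintype.card_fin]

section Covering

open scoped Classical

variable {K W : Type*} [DivisionRing K] [AddCommGroup W] [Module K W]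

theorem JkSet_inter_JStarSet_subset_range {x : Fin 5 → W} {y : Fin 5 → W →ₗ[K] K}
    (hpoint : ∀ v, #{j | x v ∈ LinearMap.ker (y j)} = 3)
    (hker : ∀ j, #{v | x v ∈ LinearMap.ker (y j)} = 3) :
    JkSet K 2 x ∩ JStarSet K 2 y ⊆
      Set.range fun v => ⨅ j ∈ ({j | x v ∈ LinearMap.ker (y j)} : Finset (Fin 5))ᶜ,
        LinearMap.ker (y j) := by
  let r : Fin 5 → Fin 5 → Prop := fun v j => x v ∈ LinearMap.ker (y j)
  rintro P ⟨⟨A, hA, rfl⟩, S, hS, hPS⟩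
  obtain ⟨i, j, hij, rfl⟩ := card_eq_two.mp hS
  have hcommon : A ⊆ univ.bipartiteBelow r i ∩ univ.bipartiteBelow r j := fun a ha => by
    have : x a ∈ ⨅ k ∈ ({i, j} : Finset (Fin 5)), LinearMap.ker (y k) :=
      hPS ▸ subset_span ⟨a, ha, rfl⟩
    simpa [r, mem_iInf] using this
  obtain ⟨v, hv⟩ := exists_compl_bipartiteAbove_eq_pair r hpoint hker hij
    (hA ▸ card_le_card hcommon)
  exact ⟨v, by rw [hPS, ← hv]; rfl⟩

end Covering

theorem card_inter_le_five_general
    {K W : Type*} [DivisionRing K] [AddCommGroup W] [Module K W]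
    [FiniteDimensional K W] (hW : Module.finrank K W = 4)
    (x : Fin 5 → W) (hx : MIndep K 4 x)
    (y : Fin 5 → (W →ₗ[K] K))
    (hy : MIndep Kᵐᵒᵖ 4 y)
    (hline : ∀ i, ∃ T : Finset (Fin 5),
      Submodule.span K {x i} = ⨅ j ∈ T, LinearMap.ker (y j)) :
    (JkSet K 2 x ∩ JStarSet K 2 y).ncard ≤ 5 ∧ (5 : ℕ) < 7 ∧
      Nat.choose 3 0 + Nat.choose 4 2 = 7 := by
  classical
  refine ⟨?_, by norm_num, by decide⟩
  have hpoint_ge (v : Fin 5) : 3 ≤ #{j | x v ∈ LinearMap.ker (y j)} := by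
    obtain ⟨T, hT⟩ := hline v
    have := finrank_le_card_filter_mem_ker_add_one y (hx.ne_zero (by norm_num) (by norm_num) v) hT
    omega
  have hker_le (j : Fin 5) : #{v | x v ∈ LinearMap.ker (y j)} ≤ 3 := by
    have := (hW ▸ hx).card_filter_mem_ker_lt (hy.ne_zero (by norm_num) (by norm_num) j)
    omega
  obtain ⟨hpoint, hker⟩ := card_bipartiteAbove_eq_of_le_of_le
    (fun v j => x v ∈ LinearMap.ker (y j)) (s := univ) (t := univ) rfl
    (fun v _ => hpoint_ge v) (fun j _ => hker_le j)
  calc (JkSet K 2 x ∩ JStarSet K 2 y).ncard ≤ (Set.range _).ncard :=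
        Set.ncard_le_ncard (JkSet_inter_JStarSet_subset_range (fun v => hpoint v (mem_univ v))
          (fun j => hker j (mem_univ j))) (Set.finite_range _)
    _ ≤ 5 := (Finite.card_range_le _).trans (by simp)

/-- Let `W` be `4`-dimensional, `x` a `4`-independent family of `5` vectors
of `W` and `y` a `4`-independent family of `5` functionals with kernels `U_i`, such that
every `U_i` is spanned by a subset of `X` and every line `⟨x i⟩` is the intersection of
some of the `U_j`. Then `|J_2(X) ∩ J*_2(Y)| ≤ 5 < 7 = a(5,2)`. -/
theorem card_inter_le_five
    {K W : Type*} [DivisionRing K] [AddCommGroup W] [Module K W]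
    [FiniteDimensional K W] (hW : Module.finrank K W = 4)
    (x : Fin 5 → W) (hxinj : Function.Injective x) (hx : MIndep K 4 x)
    (y : Fin 5 → (W →ₗ[K] K)) (hyinj : Function.Injective y)
    (hy : MIndep Kᵐᵒᵖ 4 y)
    (hker : ∀ i, ∃ A : Finset (Fin 5),
      LinearMap.ker (y i) = Submodule.span K (x '' ↑A))
    (hline : ∀ i, ∃ T : Finset (Fin 5),
      Submodule.span K {x i} = ⨅ j ∈ T, LinearMap.ker (y j)) :
    (JkSet K 2 x ∩ JStarSet K 2 y).ncard ≤ 5 ∧ (5 : ℕ) < 7 ∧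
      Nat.choose 3 0 + Nat.choose 4 2 = 7 :=
  card_inter_le_five_general hW x hx y hy hline
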